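/- Let X, Y be Hilbert spaces, A ∈ L(X;Y), β > 0, and fix z₀ ∈ Y. Define J(ζ) = (1/2)‖ζ‖²_X + (1/(2β))‖Aζ + z₀‖²_Y on X, and Ĵ*(w) = (1/2)⟨(A A* + β I) w, w⟩ + ⟨w, z₀⟩ on Y. Then J attains a unique minimizer ζ* and Ĵ* attains a unique minimizer w* = −(A A* + β I)⁻¹ z₀, the duality relation inf_X J = −inf_Y Ĵ* holds, and ζ* = A* w*. -/

import Mathlib

open ContinuousLinearMap

variable {X Y : Type*}
  [NormedAddCommGroup X] [InnerProductSpace ℝ X] [CompleteSpace X]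
  [NormedAddCommGroup Y] [InnerProductSpace ℝ Y] [CompleteSpace Y]

/-- The primal functional `J(ζ) = ½‖ζ‖² + (1/2β)‖Aζ + z₀‖²`. -/
noncomputable def Jfun (A : X →L[ℝ] Y) (β : ℝ) (z₀ : Y) (ζ : X) : ℝ :=
  (1 / 2) * ‖ζ‖ ^ 2 + (1 / (2 * β)) * ‖A ζ + z₀‖ ^ 2

/-- The dual functional `Ĵ*(w) = ½⟨(AA* + βI)w, w⟩ + ⟨w, z₀⟩`. -/
noncomputable def Jdual (A : X →L[ℝ] Y) (β : ℝ) (z₀ : Y) (w : Y) : ℝ :=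
  (1 / 2) * (inner ℝ (A ((adjoint A) w) + β • w) w : ℝ) + (inner ℝ w z₀ : ℝ)

/-!
The dual optimality condition is the normal equation `(A A* + β I) w = -z₀`, solvable by
Lax–Milgram since `⟪(A A* + β I) w, w⟫ = ‖A* w‖² + β ‖w‖² ≥ β ‖w‖²`. For such `w*` and
`ζ* = A* w*` the residual is `A ζ* + z₀ = -β w*`, so both `J` and `Ĵ*` expand around `ζ*`, `w*`
with no linear term and a coercive quadratic term; quadratic growth gives existence and
uniqueness of the minimizers, and evaluating both functionals at the critical points gives
`J(ζ*) = -Ĵ*(w*)`.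
-/

open scoped InnerProductSpace

lemma forall_le_and_eq_imp_of_quadratic_growth {E : Type*} [NormedAddCommGroup E]
    {f : E → ℝ} {x₀ : E} {c : ℝ} (hc : 0 < c) (h : ∀ x, f x₀ + c * ‖x - x₀‖ ^ 2 ≤ f x) :
    (∀ x, f x₀ ≤ f x) ∧ ∀ x, f x = f x₀ → x = x₀ := by
  refine ⟨fun x => (le_add_of_nonneg_right (by positivity)).trans (h x), fun x hx => ?_⟩
  by_contra hne
  have hpos : 0 < c * ‖x - x₀‖ ^ 2 := mul_pos hc (pow_pos (norm_pos_iff.2 (sub_ne_zero.2 hne)) 2)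
  linarith [h x]

section Quadratic

variable {E : Type*} [NormedAddCommGroup E] [InnerProductSpace ℝ E]

lemma ContinuousLinearMap.surjective_of_coercive [CompleteSpace E] (T : E →L[ℝ] E) {c : ℝ}
    (hc : 0 < c) (hT : ∀ u, c * ‖u‖ ^ 2 ≤ ⟪T u, u⟫_ℝ) : Function.Surjective T := by
  have hB : IsCoercive ((innerSL ℝ).comp T) :=
    ⟨c, hc, fun u => by simpa [sq, mul_assoc] using hT u⟩
  have hT' : InnerProductSpace.continuousLinearMapOfBilin ((innerSL ℝ).comp T) = T :=
    ContinuousLinearMap.ext fun _ =>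
      (InnerProductSpace.unique_continuousLinearMapOfBilin _ fun _ => rfl).symm
  rw [← hT']
  exact LinearMap.range_eq_top.1 hB.range_eq_top

lemma LinearMap.IsSymmetric.quadratic_add {T : E →ₗ[ℝ] E} (hT : T.IsSymmetric) {b x₀ : E}
    (hx₀ : T x₀ = -b) (h : E) :
    1 / 2 * ⟪T (x₀ + h), x₀ + h⟫_ℝ + ⟪x₀ + h, b⟫_ℝ =
      1 / 2 * ⟪T x₀, x₀⟫_ℝ + ⟪x₀, b⟫_ℝ + 1 / 2 * ⟪T h, h⟫_ℝ := by
  have hcross : ⟪T h, x₀⟫_ℝ = -⟪h, b⟫_ℝ := by rw [hT, hx₀, inner_neg_right]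
  have hcross' : ⟪T x₀, h⟫_ℝ = -⟪h, b⟫_ℝ := by rw [real_inner_comm, ← hT, hcross]
  rw [map_add, inner_add_left, inner_add_right, inner_add_right, inner_add_left, hcross, hcross']
  ring

end Quadratic

noncomputable def regGram (A : X →L[ℝ] Y) (β : ℝ) : Y →L[ℝ] Y :=
  A ∘L adjoint A + β • ContinuousLinearMap.id ℝ Y

section Duality

variable (A : X →L[ℝ] Y) (β : ℝ) (z₀ : Y)

lemma regGram_apply (w : Y) : regGram A β w = A (adjoint A w) + β • w := rfl

lemma inner_regGram_self (w : Y) : ⟪regGram A β w, w⟫_ℝ = ‖adjoint A w‖ ^ 2 + β * ‖w‖ ^ 2 := by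
  rw [regGram_apply, inner_add_left, real_inner_smul_left, ← adjoint_inner_right,
    real_inner_self_eq_norm_sq, real_inner_self_eq_norm_sq]

lemma isSymmetric_regGram : (regGram A β : Y →ₗ[ℝ] Y).IsSymmetric := fun v w => by
  rw [coe_coe, regGram_apply, regGram_apply, inner_add_left, inner_add_right,
    real_inner_smul_left, real_inner_smul_right, ← adjoint_inner_right A (adjoint A v),
    ← adjoint_inner_left A (adjoint A w) v]

lemma surjective_regGram {β : ℝ} (hβ : 0 < β) : Function.Surjective (regGram A β) :=
  (regGram A β).surjective_of_coercive hβ fun u => by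
    rw [inner_regGram_self]; linarith [sq_nonneg ‖adjoint A u‖]

lemma Jdual_eq (w : Y) : Jdual A β z₀ w = 1 / 2 * ⟪regGram A β w, w⟫_ℝ + ⟪w, z₀⟫_ℝ := rfl

variable {A β z₀} {wstar : Y} (hw : regGram A β wstar = -z₀)
include hw

lemma apply_adjoint_add_eq_neg_smul : A (adjoint A wstar) + z₀ = -(β • wstar) := by
  rw [← neg_neg z₀, ← hw, regGram_apply]; abel

lemma Jdual_quadratic_growth (w : Y) :
    Jdual A β z₀ wstar + β / 2 * ‖w - wstar‖ ^ 2 ≤ Jdual A β z₀ w := by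
  have h := (isSymmetric_regGram A β).quadratic_add hw (w - wstar)
  rw [add_sub_cancel, ContinuousLinearMap.coe_coe, inner_regGram_self A β (w - wstar)] at h
  rw [Jdual_eq, Jdual_eq, h]
  nlinarith [sq_nonneg ‖adjoint A (w - wstar)‖]

lemma Jfun_adjoint_add (hβ : β ≠ 0) (h : X) :
    Jfun A β z₀ (adjoint A wstar + h) =
      Jfun A β z₀ (adjoint A wstar) + 1 / 2 * ‖h‖ ^ 2 + 1 / (2 * β) * ‖A h‖ ^ 2 := by
  have hcross : ⟪-(β • wstar), A h⟫_ℝ = -(β * ⟪adjoint A wstar, h⟫_ℝ) := by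
    rw [inner_neg_left, real_inner_smul_left, ← adjoint_inner_left]
  simp only [Jfun, map_add]
  rw [add_right_comm (A _), norm_add_sq_real (adjoint A wstar), norm_add_sq_real _ (A h),
    apply_adjoint_add_eq_neg_smul hw, hcross]
  field_simp
  ring

lemma Jfun_quadratic_growth (hβ : 0 < β) (ζ : X) :
    Jfun A β z₀ (adjoint A wstar) + 1 / 2 * ‖ζ - adjoint A wstar‖ ^ 2 ≤ Jfun A β z₀ ζ := by
  have h := Jfun_adjoint_add hw hβ.ne' (ζ - adjoint A wstar)
  rw [add_sub_cancel] at h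
  rw [h]
  have : 0 ≤ 1 / (2 * β) * ‖A (ζ - adjoint A wstar)‖ ^ 2 := by positivity
  linarith

lemma Jfun_adjoint_eq_neg_Jdual :
    Jfun A β z₀ (adjoint A wstar) = -Jdual A β z₀ wstar := by
  have hquad := inner_regGram_self A β wstar
  rw [hw, inner_neg_left, real_inner_comm] at hquad
  rw [Jfun, Jdual_eq, hw, inner_neg_left, real_inner_comm, apply_adjoint_add_eq_neg_smul hw,
    norm_neg, norm_smul, Real.norm_eq_abs, mul_pow, sq_abs]
  field_simp
  linarith

end Duality

theorem stmt7 (A : X →L[ℝ] Y) (β : ℝ) (hβ : 0 < β) (z₀ : Y) :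
    ∃ ζstar : X, ∃ wstar : Y,
      (∀ ζ : X, Jfun A β z₀ ζstar ≤ Jfun A β z₀ ζ) ∧
      (∀ ζ : X, Jfun A β z₀ ζ = Jfun A β z₀ ζstar → ζ = ζstar) ∧
      (∀ w : Y, Jdual A β z₀ wstar ≤ Jdual A β z₀ w) ∧
      (∀ w : Y, Jdual A β z₀ w = Jdual A β z₀ wstar → w = wstar) ∧
      A ((adjoint A) wstar) + β • wstar = -z₀ ∧
      Jfun A β z₀ ζstar = -Jdual A β z₀ wstar ∧
      ζstar = (adjoint A) wstar := by
  obtain ⟨wstar, hw⟩ := surjective_regGram A hβ (-z₀)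
  obtain ⟨hζmin, hζuniq⟩ :=
    forall_le_and_eq_imp_of_quadratic_growth one_half_pos (Jfun_quadratic_growth hw hβ)
  obtain ⟨hwmin, hwuniq⟩ :=
    forall_le_and_eq_imp_of_quadratic_growth (half_pos hβ) (Jdual_quadratic_growth hw)
  exact ⟨adjoint A wstar, wstar, hζmin, hζuniq, hwmin, hwuniq, hw,
    Jfun_adjoint_eq_neg_Jdual hw, rfl⟩
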